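/- Let ā > δ/2 > 0 and c > 0. If α is uniformly distributed on [ā − δ/2, ā + δ/2], then Var(ln(c·α)) = (1/δ²)·((δ²/4 − ā²)·ln²((ā + δ/2)/(ā − δ/2)) + δ²). In particular, this variance does not depend on c. -/

import Mathlib

open MeasureTheory ProbabilityTheory

theorem stmt9 {Ω : Type*} [MeasureSpace Ω] [IsProbabilityMeasure (ℙ : Measure Ω)]
    (abar δ c : ℝ) (hδ : 0 < δ) (habar : δ / 2 < abar) (hc : 0 < c)
    (α : Ω → ℝ) (hα : Measurable α)
    (hunif : Measure.map α ℙ =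
      ENNReal.ofReal (1 / δ) • volume.restrict (Set.Icc (abar - δ / 2) (abar + δ / 2))) :
    variance (fun ω => Real.log (c * α ω)) ℙ =
      (1 / δ ^ 2) *
        ((δ ^ 2 / 4 - abar ^ 2) * (Real.log ((abar + δ / 2) / (abar - δ / 2))) ^ 2 + δ ^ 2) := by
  set l : ℝ := abar - δ / 2 with hldef
  set u : ℝ := abar + δ / 2 with hudef
  have hl0 : 0 < l := by simp only [hldef]; linarith
  have hu0 : 0 < u := by simp only [hudef]; linarith
  have hlu : l ≤ u := by simp only [hldef, hudef]; linarith
  have hδne : δ ≠ 0 := ne_of_gt hδ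
  -- a.e. membership of α in [l, u]
  have hmem : ∀ᵐ ω ∂ℙ, α ω ∈ Set.Icc l u := by
    apply (ae_map_iff hα.aemeasurable measurableSet_Icc).mp
    rw [hunif, ae_iff]
    simp only [Measure.smul_apply, smul_eq_mul]
    have hset : {a : ℝ | ¬(l ≤ a ∧ a ≤ u)} = (Set.Icc l u)ᶜ := rfl
    rw [hset, Measure.restrict_apply measurableSet_Icc.compl, Set.compl_inter_self]
    simp
  -- generic integral computation
  have key : ∀ (g F : ℝ → ℝ), ContinuousOn g (Set.Icc l u) →
      (∀ x ∈ Set.Icc l u, HasDerivAt F (g x) x) →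
      ∫ ω, g (α ω) ∂ℙ = (1 / δ) * (F u - F l) := by
    intro g F hg hF
    have hgm : AEStronglyMeasurable g (Measure.map α ℙ) := by
      rw [hunif]
      exact (hg.aestronglyMeasurable measurableSet_Icc).smul_measure _
    rw [← integral_map hα.aemeasurable hgm, hunif, integral_smul_measure,
      ENNReal.toReal_ofReal (by positivity), integral_Icc_eq_integral_Ioc,
      ← intervalIntegral.integral_of_le hlu,
      intervalIntegral.integral_eq_sub_of_hasDerivAt
        (fun x hx => hF x (by rwa [Set.uIcc_of_le hlu] at hx))
        ((hg.mono (by rw [Set.uIcc_of_le hlu])).intervalIntegrable)]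
    simp [smul_eq_mul]
  have hcx : ∀ x ∈ Set.Icc l u, (0:ℝ) < c * x := fun x hx =>
    mul_pos hc (lt_of_lt_of_le hl0 hx.1)
  have hcont : ContinuousOn (fun x => Real.log (c * x)) (Set.Icc l u) := by
    apply ContinuousOn.log (by fun_prop)
    intro x hx; exact ne_of_gt (hcx x hx)
  -- derivative facts
  have hdlog : ∀ x ∈ Set.Icc l u, HasDerivAt (fun y => Real.log (c * y)) (1 / x) x := by
    intro x hx
    have hx0 : x ≠ 0 := ne_of_gt (lt_of_lt_of_le hl0 hx.1)
    have h := (Real.hasDerivAt_log (ne_of_gt (hcx x hx))).comp x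
      ((hasDerivAt_id x).const_mul c)
    simpa [Function.comp_def, one_div, mul_comm, mul_assoc, mul_inv, inv_mul_cancel₀,
      (ne_of_gt hc), hx0] using h
  have hF1 : ∀ x ∈ Set.Icc l u,
      HasDerivAt (fun y => y * Real.log (c * y) - y) (Real.log (c * x)) x := by
    intro x hx
    have hx0 : x ≠ 0 := ne_of_gt (lt_of_lt_of_le hl0 hx.1)
    have h := ((hasDerivAt_id x).mul (hdlog x hx)).sub (hasDerivAt_id x)
    refine h.congr_deriv ?_
    field_simp
    simp [id]
  have hF2 : ∀ x ∈ Set.Icc l u,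
      HasDerivAt (fun y => y * (Real.log (c * y)) ^ 2 - 2 * y * Real.log (c * y) + 2 * y)
        ((Real.log (c * x)) ^ 2) x := by
    intro x hx
    have hx0 : x ≠ 0 := ne_of_gt (lt_of_lt_of_le hl0 hx.1)
    have h := (((hasDerivAt_id x).mul ((hdlog x hx).pow 2)).sub
      (((hasDerivAt_id x).const_mul 2).mul (hdlog x hx))).add
      ((hasDerivAt_id x).const_mul 2)
    refine h.congr_deriv ?_
    simp only [id_eq, Pi.pow_apply]
    field_simp
    ring
  -- the two moments
  have I1 : ∫ ω, Real.log (c * α ω) ∂ℙ =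
      (1 / δ) * ((u * Real.log (c * u) - u) - (l * Real.log (c * l) - l)) :=
    key _ _ hcont hF1
  have I2 : ∫ ω, (Real.log (c * α ω)) ^ 2 ∂ℙ =
      (1 / δ) * ((u * (Real.log (c * u)) ^ 2 - 2 * u * Real.log (c * u) + 2 * u)
        - (l * (Real.log (c * l)) ^ 2 - 2 * l * Real.log (c * l) + 2 * l)) :=
    key _ _ (hcont.pow 2) hF2
  -- Memℒp
  have hXm : AEStronglyMeasurable (fun ω => Real.log (c * α ω)) ℙ :=
    (Real.measurable_log.comp (hα.const_mul c)).aestronglyMeasurable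
  have hmemLp : MemLp (fun ω => Real.log (c * α ω)) 2 ℙ := by
    apply MemLp.of_bound hXm (max |Real.log (c * l)| |Real.log (c * u)|)
    filter_upwards [hmem] with ω hω
    rw [Real.norm_eq_abs]
    exact abs_le_max_abs_abs
      (Real.log_le_log (mul_pos hc hl0) (by nlinarith [hω.1]))
      (Real.log_le_log (mul_pos hc (lt_of_lt_of_le hl0 hω.1)) (by nlinarith [hω.2]))
  rw [variance_eq_sub hmemLp]
  simp only [Pi.pow_apply]
  rw [I1, I2]
  -- algebra
  have hAB : Real.log (c * u) = Real.log (c * l) + Real.log (u / l) := by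
    rw [Real.log_div (ne_of_gt hu0) (ne_of_gt hl0), Real.log_mul (ne_of_gt hc) (ne_of_gt hu0),
      Real.log_mul (ne_of_gt hc) (ne_of_gt hl0)]
    ring
  rw [hAB, hudef, hldef]
  field_simp
  ring
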